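/- arXiv:1310.3382 — 6 statements merged into one kernel-verified Lean document; each statement's English description precedes it below -/
import Mathlib

section
/- The space ℝⁿ with the sup norm ℓ∞ⁿ has the binary intersection property: every family of pairwise intersecting closed balls in ℓ∞ⁿ has nonempty intersection. -/
/-!
Pairwise intersecting closed intervals `[aᵢ, bᵢ]` satisfy `aᵢ ≤ bⱼ` for all `i, j`, so `sup aᵢ`
lies in all of them. Closed balls of the sup norm are products of closed intervals, one per
coordinate, so a common point of the balls is assembled coordinatewise.
-/

open Metric Set

universe u

def HasBinaryIntersectionProperty (α : Type*) [PseudoMetricSpace α] : Prop :=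
  ∀ (ι : Type u) (x : ι → α) (r : ι → ℝ),
    (∀ i j, (closedBall (x i) (r i) ∩ closedBall (x j) (r j)).Nonempty) →
      (⋂ i, closedBall (x i) (r i)).Nonempty

theorem ciSup_mem_iInter_Icc_of_forall_le {α ι : Type*} [ConditionallyCompleteLattice α]
    [Nonempty ι] {a b : ι → α} (h : ∀ i j, a i ≤ b j) :
    ⨆ i, a i ∈ ⋂ i, Icc (a i) (b i) :=
  mem_iInter.2 fun j =>
    ⟨le_ciSup ⟨b j, forall_mem_range.2 fun i => h i j⟩ j, ciSup_le fun i => h i j⟩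

theorem Real.hasBinaryIntersectionProperty : HasBinaryIntersectionProperty.{u} ℝ := by
  intro ι x r h
  rcases isEmpty_or_nonempty ι with _ | _
  · simp
  simp only [Real.closedBall_eq_Icc] at h ⊢
  refine ⟨_, ciSup_mem_iInter_Icc_of_forall_le fun i j => ?_⟩
  obtain ⟨p, ⟨hip, -⟩, ⟨-, hpj⟩⟩ := h i j
  exact hip.trans hpj

theorem hasBinaryIntersectionProperty_pi {β : Type*} [Fintype β] {π : β → Type*}
    [∀ b, PseudoMetricSpace (π b)] (hπ : ∀ b, HasBinaryIntersectionProperty.{u} (π b)) :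
    HasBinaryIntersectionProperty.{u} (∀ b, π b) := by
  intro ι x r h
  have hr : ∀ i, 0 ≤ r i := fun i => nonempty_closedBall.1 (h i i).left
  have hcoord : ∀ b i j,
      (closedBall (x i b) (r i) ∩ closedBall (x j b) (r j)).Nonempty := by
    intro b i j
    obtain ⟨p, hpi, hpj⟩ := h i j
    rw [closedBall_pi _ (hr i)] at hpi
    rw [closedBall_pi _ (hr j)] at hpj
    exact ⟨p b, hpi b (mem_univ b), hpj b (mem_univ b)⟩
  choose y hy using fun b => hπ b ι (fun i => x i b) r (hcoord b)
  refine ⟨y, mem_iInter.2 fun i => ?_⟩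
  rw [closedBall_pi _ (hr i)]
  exact fun b _ => mem_iInter.1 (hy b) i

/-- `ℝⁿ` with the sup norm has the binary intersection property: every family of
pairwise intersecting closed balls has a common point. -/
theorem sup_norm_binary_intersection_property
    (n : ℕ) {ι : Type*} (x : ι → (Fin n → ℝ)) (r : ι → ℝ)
    (h : ∀ i j, (Metric.closedBall (x i) (r i) ∩ Metric.closedBall (x j) (r j)).Nonempty) :
    (⋂ i, Metric.closedBall (x i) (r i)).Nonempty :=
  hasBinaryIntersectionProperty_pi (fun _ => Real.hasBinaryIntersectionProperty) ι x r h
end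

section
/- Let X be a real normed space whose dual X* is strictly convex. Then for every subspace Y of X and every continuous linear functional g on Y, there is a unique norm-preserving Hahn–Banach extension of g to X. -/
/-! The midpoint of two norm-preserving extensions `f₁`, `f₂` of `g` again extends `g`, so
`‖f₁ + f₂‖ ≥ 2 ‖g‖ = ‖f₁‖ + ‖f₂‖`: the triangle inequality is an equality, which in a strictly
convex dual forces `f₁ = f₂`. Existence is the Hahn–Banach theorem. -/

namespace ContinuousLinearMap

theorem norm_le_of_restrict_eq {𝕜 E F : Type*} [NontriviallyNormedField 𝕜]
    [SeminormedAddCommGroup E] [NormedSpace 𝕜 E] [SeminormedAddCommGroup F] [NormedSpace 𝕜 F]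
    {p : Submodule 𝕜 E} {g : p →L[𝕜] F} {f : E →L[𝕜] F} (hfg : ∀ y : p, f y = g y) :
    ‖g‖ ≤ ‖f‖ :=
  g.opNorm_le_bound (norm_nonneg f) fun y => hfg y ▸ f.le_opNorm y

theorem eq_of_norm_preserving_extensions {E F : Type*} [NormedAddCommGroup E]
    [NormedSpace ℝ E] [NormedAddCommGroup F] [NormedSpace ℝ F]
    [StrictConvexSpace ℝ (E →L[ℝ] F)] {p : Submodule ℝ E} {g : p →L[ℝ] F} {f₁ f₂ : E →L[ℝ] F}
    (hf₁ : ∀ y : p, f₁ y = g y) (hn₁ : ‖f₁‖ = ‖g‖) (hf₂ : ∀ y : p, f₂ y = g y)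
    (hn₂ : ‖f₂‖ = ‖g‖) : f₁ = f₂ := by
  refine eq_of_norm_eq_of_norm_add_eq (hn₁.trans hn₂.symm) (le_antisymm (norm_add_le _ _) ?_)
  have hmid : ‖g‖ ≤ ‖(2⁻¹ : ℝ) • (f₁ + f₂)‖ :=
    norm_le_of_restrict_eq fun y => by
      simp only [smul_apply, add_apply, hf₁, hf₂, ← two_smul ℝ (g y), smul_smul]
      norm_num
  have hhalf := hmid.trans (opNorm_smul_le _ _)
  rw [Real.norm_of_nonneg (by norm_num)] at hhalf
  linarith

end ContinuousLinearMap

/-- Taylor–Foguel theorem (one direction): if the dual of a real normed space `X`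
is strictly convex, then every continuous linear functional on every subspace of `X`
has a unique norm-preserving Hahn–Banach extension. -/
theorem unique_hahn_banach_of_dual_strictly_convex
    {X : Type*} [NormedAddCommGroup X] [NormedSpace ℝ X]
    (hsc : ∀ f g : X →L[ℝ] ℝ, ‖f‖ = 1 → ‖g‖ = 1 → ‖f + g‖ = 2 → f = g)
    (Y : Subspace ℝ X) (g : Y →L[ℝ] ℝ) :
    ∃! f : X →L[ℝ] ℝ, (∀ y : Y, f y = g y) ∧ ‖f‖ = ‖g‖ := by
  have : StrictConvexSpace ℝ (X →L[ℝ] ℝ) :=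
    StrictConvexSpace.of_norm_add fun f f' hf hf' hsum => hsc f f' hf hf' hsum ▸ SameRay.rfl
  obtain ⟨f, hf, hfn⟩ := exists_extension_norm_eq Y g
  exact ⟨f, ⟨hf, hfn⟩, fun f' ⟨hf', hfn'⟩ =>
    ContinuousLinearMap.eq_of_norm_preserving_extensions hf' hfn' hf hfn⟩
end

section
/- Let X be a real normed space such that every continuous linear functional on every subspace of X admits a unique norm-preserving extension to X. Then X* is strictly convex. -/
/-! If `‖f‖ = ‖g‖ = 1` and `‖f + g‖ = 2`, pick unit vectors `x` with `f x + g x → 2`; then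
`f x → 1` and `(f - g) x → 0`, so projecting `x` along a fixed `z` with `(f - g) z = 1` onto
`Y = ker (f - g)` gives vectors of `Y` of norm `→ 1` on which `f → 1`. Hence `f|_Y` has norm `1`,
and `f`, `g` are two norm-preserving extensions of it, so uniqueness forces `f = g`. -/

open Filter Topology

namespace ContinuousLinearMap

variable {X : Type*} [NormedAddCommGroup X] [NormedSpace ℝ X]

theorem apply_le_norm_comp_subtypeL_ker (φ h : X →L[ℝ] ℝ) {z : X} (hz : h z = 1) (x : X) :
    φ x ≤ ‖φ.comp (LinearMap.ker (h : X →ₗ[ℝ] ℝ)).subtypeL‖ * (‖x‖ + |h x| * ‖z‖) +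
      |h x| * |φ z| := by
  set Y := LinearMap.ker (h : X →ₗ[ℝ] ℝ)
  have hy : x - h x • z ∈ Y := by simp [Y, hz]
  have hφ : φ x = φ (x - h x • z) + h x * φ z := by simp
  have hy_norm : ‖x - h x • z‖ ≤ ‖x‖ + |h x| * ‖z‖ := by
    simpa [norm_smul] using norm_sub_le x (h x • z)
  calc φ x ≤ ‖φ.comp Y.subtypeL‖ * ‖x - h x • z‖ + |h x| * |φ z| := by
        rw [hφ, ← abs_mul]
        gcongr
        · exact (le_abs_self _).trans ((φ.comp Y.subtypeL).le_opNorm ⟨_, hy⟩)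
        · exact le_abs_self _
    _ ≤ _ := by gcongr

theorem le_norm_comp_subtypeL_ker (φ : X →L[ℝ] ℝ) {h : X →L[ℝ] ℝ} (hh : h ≠ 0) {c : ℝ}
    (hc : ∀ ε > 0, ∃ x, ‖x‖ ≤ 1 ∧ c - ε < φ x ∧ |h x| < ε) :
    c ≤ ‖φ.comp (LinearMap.ker (h : X →ₗ[ℝ] ℝ)).subtypeL‖ := by
  obtain ⟨z, hz⟩ := LinearMap.surjective (f := (h : X →ₗ[ℝ] ℝ)) (by exact_mod_cast hh) 1
  set N := ‖φ.comp (LinearMap.ker (h : X →ₗ[ℝ] ℝ)).subtypeL‖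
  have hlim : Tendsto (fun ε : ℝ ↦ N * (1 + ε * ‖z‖) + ε * |φ z| + ε) (𝓝[>] 0) (𝓝 N) := by
    have : Continuous fun ε : ℝ ↦ N * (1 + ε * ‖z‖) + ε * |φ z| + ε := by fun_prop
    simpa using (this.tendsto 0).mono_left nhdsWithin_le_nhds
  refine ge_of_tendsto hlim (eventually_nhdsWithin_of_forall fun ε (hε : 0 < ε) ↦ ?_)
  obtain ⟨x, hx, hφx, hhx⟩ := hc ε hε
  have := apply_le_norm_comp_subtypeL_ker φ h hz x
  have : N * (‖x‖ + |h x| * ‖z‖) ≤ N * (1 + ε * ‖z‖) := by gcongr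
  have : |h x| * |φ z| ≤ ε * |φ z| := by gcongr
  linarith

theorem exists_apply_near_one_of_two_le_norm_add {f g : X →L[ℝ] ℝ} (hf : ‖f‖ ≤ 1)
    (hg : ‖g‖ ≤ 1) (hfg : 2 ≤ ‖f + g‖) :
    ∀ ε > 0, ∃ x, ‖x‖ ≤ 1 ∧ 1 - ε < f x ∧ |(f - g) x| < ε := by
  intro ε hε
  have near : ∀ y : X, ‖y‖ ≤ 1 → 2 - ε < f y + g y →
      ∃ x, ‖x‖ ≤ 1 ∧ 1 - ε < f x ∧ |(f - g) x| < ε := by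
    intro y hy hfgy
    have hfy : f y ≤ 1 :=
      ((le_abs_self _).trans (f.le_opNorm y)).trans (mul_le_one₀ hf (norm_nonneg y) hy)
    have hgy : g y ≤ 1 :=
      ((le_abs_self _).trans (g.le_opNorm y)).trans (mul_le_one₀ hg (norm_nonneg y) hy)
    refine ⟨y, hy, by linarith, ?_⟩
    rw [sub_apply, abs_sub_lt_iff]
    constructor <;> linarith
  obtain ⟨x, hx, hfgx⟩ := (f + g).exists_lt_apply_of_lt_opNorm (r := 2 - ε) (by linarith)
  rw [Real.norm_eq_abs, lt_abs] at hfgx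
  rcases hfgx with hfgx | hfgx
  · exact near x hx.le (by simpa using hfgx)
  · refine near (-x) (by simpa using hx.le) ?_
    simp only [map_neg, add_apply] at hfgx ⊢
    linarith

end ContinuousLinearMap

/-- Taylor–Foguel theorem (converse direction): if every continuous linear functional
on every subspace of the real normed space `X` admits a unique norm-preserving
extension to `X`, then the dual of `X` is strictly convex. -/
theorem dual_strictly_convex_of_unique_hahn_banach
    {X : Type*} [NormedAddCommGroup X] [NormedSpace ℝ X]
    (hu : ∀ (Y : Subspace ℝ X) (g : Y →L[ℝ] ℝ),
      ∃! f : X →L[ℝ] ℝ, (∀ y : Y, f y = g y) ∧ ‖f‖ = ‖g‖) :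
    ∀ f g : X →L[ℝ] ℝ, ‖f‖ = 1 → ‖g‖ = 1 → ‖f + g‖ = 2 → f = g := by
  intro f g hf hg hfg
  by_contra hne
  set Y := LinearMap.ker ((f - g : X →L[ℝ] ℝ) : X →ₗ[ℝ] ℝ)
  have hgf : ∀ y : Y, g y = f y := fun y ↦ (sub_eq_zero.mp y.2).symm
  have hnorm : ‖f.comp Y.subtypeL‖ = 1 := by
    refine le_antisymm ?_ ?_
    · exact (f.opNorm_comp_le _).trans (by simpa [hf] using Submodule.norm_subtypeL_le Y)
    · exact f.le_norm_comp_subtypeL_ker (sub_ne_zero.mpr hne)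
        (ContinuousLinearMap.exists_apply_near_one_of_two_le_norm_add hf.le hg.le hfg.ge)
  exact hne <| (hu Y (f.comp Y.subtypeL)).unique ⟨fun _ ↦ rfl, hf.trans hnorm.symm⟩
    ⟨hgf, hg.trans hnorm.symm⟩
end

section
/- Let X be a normed space, Y a Banach space, A = {x, y} a two-point subset of X, and u : A → Y a 1-Lipschitz map with x ≠ y. For any z ∈ X, setting t = min{1, ‖z − y‖/‖x − y‖} and u(z) = t·u(x) + (1−t)·u(y) extends u to a 1-Lipschitz map on {x, y, z}. -/
/-!
The value `u z` is the point of the segment `[u y, u x]` at parameter `t`, so it lies at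
distance `t ‖u x − u y‖ ≤ t ‖x − y‖` from `u y` and `(1 − t) ‖u x − u y‖ ≤ (1 − t) ‖x − y‖`
from `u x`. The choice of `t` makes `t ‖x − y‖ ≤ ‖z − y‖`, and `(1 − t) ‖x − y‖` is either `0`
or `‖x − y‖ − ‖z − y‖ ≤ ‖z − x‖` by the triangle inequality.
-/

open AffineMap

lemma min_one_div_mul_le {a d : ℝ} (ha : 0 ≤ a) (hd : 0 ≤ d) : min 1 (a / d) * d ≤ a := by
  rcases hd.eq_or_lt with rfl | hd
  · simpa using ha
  · calc min 1 (a / d) * d ≤ a / d * d := by gcongr; exact min_le_right _ _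
      _ = a := div_mul_cancel₀ a hd.ne'

lemma one_sub_min_one_div_mul_le {a b d : ℝ} (hb : 0 ≤ b) (hd : d ≤ a + b) :
    (1 - min 1 (a / d)) * d ≤ b := by
  rcases min_choice 1 (a / d) with h | h <;> rw [h]
  · simpa using hb
  · rcases eq_or_ne d 0 with rfl | hd0
    · simpa using hb
    · rw [sub_mul, one_mul, div_mul_cancel₀ a hd0]
      linarith

theorem two_point_lipschitz_extension_general
    {X : Type*} [NormedAddCommGroup X]
    {Y : Type*} [NormedAddCommGroup Y] [NormedSpace ℝ Y]
    (x y z : X) (ux uy : Y) (hu : ‖ux - uy‖ ≤ ‖x - y‖) :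
    let t : ℝ := min 1 (‖z - y‖ / ‖x - y‖)
    let uz : Y := t • ux + (1 - t) • uy
    ‖uz - ux‖ ≤ ‖z - x‖ ∧ ‖uz - uy‖ ≤ ‖z - y‖ := by
  intro t uz
  have ht0 : 0 ≤ t := le_min zero_le_one (by positivity)
  have ht1 : t ≤ 1 := min_le_left _ _
  have huz : uz = lineMap uy ux t := by rw [lineMap_apply_module, add_comm]
  have htri : ‖x - y‖ ≤ ‖z - y‖ + ‖z - x‖ := by
    linarith [norm_sub_le_norm_sub_add_norm_sub x z y, norm_sub_rev x z]
  constructor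
  · calc ‖uz - ux‖ = (1 - t) * ‖ux - uy‖ := by
          rw [← dist_eq_norm, huz, dist_lineMap_right, Real.norm_of_nonneg (sub_nonneg.2 ht1),
            dist_comm, dist_eq_norm]
      _ ≤ (1 - t) * ‖x - y‖ := by gcongr
      _ ≤ ‖z - x‖ := one_sub_min_one_div_mul_le (norm_nonneg _) htri
  · calc ‖uz - uy‖ = t * ‖ux - uy‖ := by
          rw [← dist_eq_norm, huz, dist_lineMap_left, Real.norm_of_nonneg ht0, dist_comm,
            dist_eq_norm]
      _ ≤ t * ‖x - y‖ := by gcongr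
      _ ≤ ‖z - y‖ := min_one_div_mul_le (norm_nonneg _) (norm_nonneg _)

/-- Extension of a `1`-Lipschitz map from a two-point set `{x, y}` to a third point `z`:
with `t = min 1 (‖z − y‖ / ‖x − y‖)` and `u z := t • u x + (1 − t) • u y`, the resulting
map on `{x, y, z}` is `1`-Lipschitz. -/
theorem two_point_lipschitz_extension
    {X : Type*} [NormedAddCommGroup X] [NormedSpace ℝ X]
    {Y : Type*} [NormedAddCommGroup Y] [NormedSpace ℝ Y] [CompleteSpace Y]
    (x y z : X) (hxy : x ≠ y) (ux uy : Y) (hu : ‖ux - uy‖ ≤ ‖x - y‖) :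
    let t : ℝ := min 1 (‖z - y‖ / ‖x - y‖)
    let uz : Y := t • ux + (1 - t) • uy
    ‖uz - ux‖ ≤ ‖z - x‖ ∧ ‖uz - uy‖ ≤ ‖z - y‖ :=
  two_point_lipschitz_extension_general x y z ux uy hu
end

section
/- Let H be a real Hilbert space. Then H has the Kirszbraun property: given finitely many points x₁,…,xₙ ∈ H, y₁,…,yₙ ∈ H and radii r₁,…,rₙ > 0 such that ‖yᵢ − yⱼ‖ ≤ ‖xᵢ − xⱼ‖ for all i, j, and the closed balls B(xᵢ, rᵢ) have a common point, then the closed balls B(yᵢ, rᵢ) have a common point. -/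
open Finset Filter Topology
open scoped RealInnerProductSpace

/-!
Fix `p` in every ball `B(xᵢ, rᵢ)` and minimise `w ↦ maxᵢ (‖w - yᵢ‖² - ‖p - xᵢ‖²)` over the
convex hull of the `yᵢ` (the paper's `maxᵢ ‖w - yᵢ‖ / ‖p - xᵢ‖` without the division, which
would break down when `p = xᵢ`). A minimiser `w`, with minimum `m`, lies in the convex hull of
the active points `yᵢ` (those attaining `m`): otherwise moving `w` towards its projection onto
that hull brings it strictly closer to every active `yᵢ`. Writing `w = ∑ aᵢ yᵢ` over active
indices, the parallelogram identity
`∑ᵢⱼ aᵢ aⱼ ‖vᵢ - vⱼ‖² = 2 ∑ᵢ aᵢ ‖q - vᵢ‖² - 2 ‖q - ∑ᵢ aᵢ vᵢ‖²`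
for the `yᵢ` at `q = w` and for the `xᵢ` at `q = p`, with `‖yᵢ - yⱼ‖ ≤ ‖xᵢ - xⱼ‖`, gives
`2 ∑ aᵢ (m + ‖p - xᵢ‖²) ≤ 2 ∑ aᵢ ‖p - xᵢ‖²`, so `m ≤ 0` and `‖w - yᵢ‖ ≤ ‖p - xᵢ‖ ≤ rᵢ`.
-/

section

variable {ι E : Type*} [SeminormedAddCommGroup E] [Fintype ι] [Nonempty ι]

noncomputable def maxExcess (y : ι → E) (c : ι → ℝ) (w : E) : ℝ :=
  univ.sup' univ_nonempty fun i ↦ ‖w - y i‖ ^ 2 - c i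

theorem continuous_maxExcess (y : ι → E) (c : ι → ℝ) : Continuous (maxExcess y c) :=
  Continuous.finset_sup'_apply _ fun i _ ↦ by fun_prop

theorem le_maxExcess (y : ι → E) (c : ι → ℝ) (w : E) (i : ι) :
    ‖w - y i‖ ^ 2 - c i ≤ maxExcess y c w :=
  le_sup' (fun i ↦ ‖w - y i‖ ^ 2 - c i) (mem_univ i)

theorem exists_eq_maxExcess (y : ι → E) (c : ι → ℝ) (w : E) :
    ∃ i, ‖w - y i‖ ^ 2 - c i = maxExcess y c w := by
  obtain ⟨i, -, hi⟩ := exists_mem_eq_sup' univ_nonempty fun i ↦ ‖w - y i‖ ^ 2 - c i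
  exact ⟨i, hi.symm⟩

end

section

variable {ι E : Type*} [NormedAddCommGroup E] [InnerProductSpace ℝ E]

theorem norm_add_smul_sub_sub_sq_lt {w q z : E} (hz : ⟪w - q, z - q⟫ ≤ 0) (hwq : w ≠ q)
    {t : ℝ} (ht₀ : 0 < t) (ht₁ : t ≤ 1) : ‖w + t • (q - w) - z‖ ^ 2 < ‖w - z‖ ^ 2 := by
  have hsplit : w + t • (q - w) - z = (w - z) - t • (w - q) := by module
  have hinner : ‖w - q‖ ^ 2 ≤ ⟪w - z, w - q⟫ := by
    have : w - z = (w - q) - (z - q) := by abel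
    rw [this, inner_sub_left, real_inner_self_eq_norm_sq, real_inner_comm]
    linarith
  have hpos : 0 < ‖w - q‖ ^ 2 := by positivity [sub_ne_zero.2 hwq]
  rw [hsplit, norm_sub_sq_real, real_inner_smul_right, norm_smul, mul_pow, Real.norm_eq_abs,
    sq_abs]
  nlinarith [mul_le_mul_of_nonneg_left hinner ht₀.le,
    mul_pos (mul_pos ht₀ hpos) (by linarith : 0 < 2 - t)]

theorem sum_sum_mul_norm_sub_sq {s : Finset ι} {a : ι → ℝ} (ha : ∑ i ∈ s, a i = 1)
    (v : ι → E) (q : E) :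
    ∑ i ∈ s, ∑ j ∈ s, a i * a j * ‖v i - v j‖ ^ 2 =
      2 * ∑ i ∈ s, a i * ‖q - v i‖ ^ 2 - 2 * ‖q - ∑ i ∈ s, a i • v i‖ ^ 2 := by
  have hbary : q - ∑ i ∈ s, a i • v i = ∑ i ∈ s, a i • (q - v i) := by
    simp only [smul_sub, sum_sub_distrib, ← sum_smul, ha, one_smul]
  have hnorm : ‖∑ i ∈ s, a i • (q - v i)‖ ^ 2 =
      ∑ i ∈ s, ∑ j ∈ s, a i * a j * ⟪q - v i, q - v j⟫ := by
    simp only [← real_inner_self_eq_norm_sq, sum_inner, inner_sum, real_inner_smul_left,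
      real_inner_smul_right, mul_assoc]
    exact sum_congr rfl fun i _ ↦ sum_congr rfl fun j _ ↦ by rw [real_inner_comm]
  have hpair : ∀ i j, a i * a j * ‖v i - v j‖ ^ 2 = a i * a j * ‖q - v i‖ ^ 2 +
      a i * a j * ‖q - v j‖ ^ 2 - 2 * (a i * a j * ⟪q - v i, q - v j⟫) := by
    intro i j
    rw [← norm_sub_rev, show v j - v i = (q - v i) - (q - v j) by abel, norm_sub_sq_real]
    ring
  have hleft : ∑ i ∈ s, ∑ j ∈ s, a i * a j * ‖q - v i‖ ^ 2 = ∑ i ∈ s, a i * ‖q - v i‖ ^ 2 := by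
    simp only [mul_right_comm (a _) (a _), ← mul_sum, ha, mul_one]
  have hright : ∑ i ∈ s, ∑ j ∈ s, a i * a j * ‖q - v j‖ ^ 2 = ∑ i ∈ s, a i * ‖q - v i‖ ^ 2 := by
    rw [sum_comm]
    simp only [mul_comm (a _) (a _), mul_assoc, ← mul_sum, ← sum_mul, ha, one_mul]
  simp only [hpair, sum_sub_distrib, sum_add_distrib, ← mul_sum, hleft, hright, hbary, hnorm]
  ring

theorem nonpos_of_mem_convexHull_image {x y : ι → E}
    (hcontract : ∀ i j, ‖y i - y j‖ ≤ ‖x i - x j‖) {p w : E} {m : ℝ} {s : Set ι}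
    (hw : w ∈ convexHull ℝ (y '' s)) (hs : ∀ i ∈ s, ‖w - y i‖ ^ 2 = m + ‖p - x i‖ ^ 2) :
    m ≤ 0 := by
  rw [Set.image_eq_range, convexHull_range_eq_exists_affineCombination] at hw
  obtain ⟨t, a, ha₀, ha₁, hwa⟩ := hw
  rw [affineCombination_eq_linear_combination _ _ _ ha₁] at hwa
  have hy := sum_sum_mul_norm_sub_sq ha₁ (fun i : s ↦ y i) w
  have hx := sum_sum_mul_norm_sub_sq ha₁ (fun i : s ↦ x i) p
  rw [hwa, sub_self, norm_zero] at hy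
  have hle : ∑ i ∈ t, ∑ j ∈ t, a i * a j * ‖y i - y j‖ ^ 2 ≤
      ∑ i ∈ t, ∑ j ∈ t, a i * a j * ‖x i - x j‖ ^ 2 :=
    sum_le_sum fun i hi ↦ sum_le_sum fun j hj ↦ mul_le_mul_of_nonneg_left
      (pow_le_pow_left₀ (norm_nonneg _) (hcontract i j) 2) (mul_nonneg (ha₀ i hi) (ha₀ j hj))
  have hlevel : ∑ i ∈ t, a i * ‖w - y i‖ ^ 2 = m + ∑ i ∈ t, a i * ‖p - x i‖ ^ 2 := by
    simp only [hs _ (Subtype.prop _), mul_add, sum_add_distrib, ← sum_mul, ha₁, one_mul]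
  nlinarith [sq_nonneg ‖p - ∑ i ∈ t, a i • x i‖]

theorem mem_convexHull_of_isMinOn_maxExcess [Fintype ι] [Nonempty ι] {y : ι → E} {c : ι → ℝ}
    {K : Set E} (hK : Convex ℝ K) (hyK : ∀ i, y i ∈ K) {w : E} (hwK : w ∈ K)
    (hmin : IsMinOn (maxExcess y c) K w) :
    w ∈ convexHull ℝ (y '' {i | ‖w - y i‖ ^ 2 - c i = maxExcess y c w}) := by
  set m := maxExcess y c w
  set C := convexHull ℝ (y '' {i | ‖w - y i‖ ^ 2 - c i = m})
  by_contra hwC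
  obtain ⟨i₀, hi₀⟩ := exists_eq_maxExcess y c w
  have hCne : C.Nonempty := ⟨y i₀, subset_convexHull ℝ _ ⟨i₀, hi₀, rfl⟩⟩
  obtain ⟨q, hqC, hq⟩ := exists_norm_eq_iInf_of_complete_convex hCne
    (((Set.toFinite _).image y).isCompact_convexHull ℝ).isComplete (convex_convexHull ℝ _) w
  have hobtuse := (norm_eq_iInf_iff_real_inner_le_zero (convex_convexHull ℝ _) hqC).1 hq
  have hwq : w ≠ q := fun h ↦ hwC (h ▸ hqC)
  have hdescent : ∀ i, ∀ᶠ t in 𝓝[>] (0 : ℝ), ‖w + t • (q - w) - y i‖ ^ 2 - c i < m := by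
    intro i
    by_cases hi : ‖w - y i‖ ^ 2 - c i = m
    · filter_upwards [Ioc_mem_nhdsGT zero_lt_one] with t ht
      have := norm_add_smul_sub_sub_sq_lt
        (hobtuse _ (subset_convexHull ℝ _ ⟨i, hi, rfl⟩)) hwq ht.1 ht.2
      linarith
    · have hlt : ‖w - y i‖ ^ 2 - c i < m := (le_maxExcess y c w i).lt_of_ne hi
      have hcont : ContinuousAt (fun t : ℝ ↦ ‖w + t • (q - w) - y i‖ ^ 2 - c i) 0 := by
        fun_prop
      exact (hcont.eventually_lt continuousAt_const (by simpa using hlt)).filter_mono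
        nhdsWithin_le_nhds
  obtain ⟨t, hlt, ht⟩ := ((eventually_all.2 hdescent).and (Ioc_mem_nhdsGT one_pos)).exists
  have hqK : q ∈ K := (hK.convexHull_subset_iff.2 (Set.image_subset_iff.2 fun i _ ↦ hyK i)) hqC
  have hu : w + t • (q - w) ∈ K := hK.add_smul_sub_mem hwK hqK ⟨ht.1.le, ht.2⟩
  exact (hmin hu).not_gt ((sup'_lt_iff _).2 fun i _ ↦ hlt i)

theorem exists_norm_sub_le_norm_sub [Finite ι] {x y : ι → E}
    (hcontract : ∀ i j, ‖y i - y j‖ ≤ ‖x i - x j‖) (p : E) : ∃ w, ∀ i, ‖w - y i‖ ≤ ‖p - x i‖ := by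
  rcases isEmpty_or_nonempty ι with hι | hι
  · exact ⟨0, hι.elim⟩
  have := Fintype.ofFinite ι
  set c := fun i ↦ ‖p - x i‖ ^ 2
  obtain ⟨w, hwK, hmin⟩ := ((Set.finite_range y).isCompact_convexHull ℝ).exists_isMinOn
    ((Set.range_nonempty y).mono (subset_convexHull ℝ _)) (continuous_maxExcess y c).continuousOn
  have hw := mem_convexHull_of_isMinOn_maxExcess (convex_convexHull ℝ _)
    (fun i ↦ subset_convexHull ℝ _ (Set.mem_range_self i)) hwK hmin
  have hm : maxExcess y c w ≤ 0 :=
    nonpos_of_mem_convexHull_image hcontract hw fun i hi ↦ eq_add_of_sub_eq hi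
  refine ⟨w, fun i ↦ ?_⟩
  have hsq : ‖w - y i‖ ^ 2 ≤ ‖p - x i‖ ^ 2 := by linarith [le_maxExcess y c w i]
  exact (sq_le_sq₀ (norm_nonneg _) (norm_nonneg _)).1 hsq

end

theorem hilbert_kirszbraun_property_general
    {H : Type*} [NormedAddCommGroup H] [InnerProductSpace ℝ H]
    (n : ℕ) (x y : Fin n → H) (r : Fin n → ℝ)
    (hcontract : ∀ i j, ‖y i - y j‖ ≤ ‖x i - x j‖)
    (hx : (⋂ i, Metric.closedBall (x i) (r i)).Nonempty) :
    (⋂ i, Metric.closedBall (y i) (r i)).Nonempty := by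
  obtain ⟨p, hp⟩ := hx
  obtain ⟨w, hw⟩ := exists_norm_sub_le_norm_sub hcontract p
  refine ⟨w, Set.mem_iInter.2 fun i ↦ ?_⟩
  have hpi := Set.mem_iInter.1 hp i
  rw [Metric.mem_closedBall, dist_eq_norm] at hpi ⊢
  exact (hw i).trans hpi

/-- Kirszbraun intersection property of real Hilbert spaces: if `‖yᵢ − yⱼ‖ ≤ ‖xᵢ − xⱼ‖`
for all `i, j` and the closed balls `B(xᵢ, rᵢ)` have a common point, then so do the
closed balls `B(yᵢ, rᵢ)`. -/
theorem hilbert_kirszbraun_property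
    {H : Type*} [NormedAddCommGroup H] [InnerProductSpace ℝ H] [CompleteSpace H]
    (n : ℕ) (x y : Fin n → H) (r : Fin n → ℝ) (hr : ∀ i, 0 < r i)
    (hcontract : ∀ i j, ‖y i - y j‖ ≤ ‖x i - x j‖)
    (hx : (⋂ i, Metric.closedBall (x i) (r i)).Nonempty) :
    (⋂ i, Metric.closedBall (y i) (r i)).Nonempty :=
  hilbert_kirszbraun_property_general n x y r hcontract hx
end

section
/- Let X be a quasi-Banach space (complete quasi-normed space) and assume that for every x ∈ X with ‖x‖ = 1 the linear functional t·x ↦ t on span{x} extends to an L-Lipschitz function on X (with L independent of x). Then ‖x‖₀ := sup{f(x) : f : X → ℝ Lipschitz, f(0)=0, Lipschitz constant ≤ 1} defines a norm on X satisfying ‖x‖₀ ≤ ‖x‖ ≤ L‖x‖₀, and hence the quasi-norm of X is equivalent to a norm (X is locally convex). -/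
/-- Local convexity of a quasi-Banach space via Lipschitz extension of functionals:
let `q` be a quasi-norm on a real vector space `X` and suppose that, for some uniform
constant `L > 0`, for every unit vector `x` the linear functional `t • x ↦ t` on the
span of `x` extends to an `L`-Lipschitz function on `X` vanishing at `0`.  Then
`‖x‖₀ := sup { f x : f is 1-Lipschitz (w.r.t. q), f 0 = 0 }` defines a norm on `X`
satisfying `‖x‖₀ ≤ q x ≤ L ‖x‖₀`, so the quasi-norm is equivalent to a norm. -/
theorem quasi_banach_locally_convex_of_lipschitz_extension
    {X : Type*} [AddCommGroup X] [Module ℝ X]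
    (q : X → ℝ)
    (hq0 : ∀ x, 0 ≤ q x)
    (hqeq : ∀ x, q x = 0 ↔ x = 0)
    (hqsmul : ∀ (s : ℝ) (x : X), q (s • x) = |s| * q x)
    (C : ℝ) (hC : 1 ≤ C) (hqadd : ∀ x y, q (x + y) ≤ C * (q x + q y))
    (L : ℝ) (hL : 0 < L)
    (hext : ∀ x : X, q x = 1 → ∃ F : X → ℝ,
      (∀ a b, |F a - F b| ≤ L * q (a - b)) ∧ F 0 = 0 ∧ ∀ t : ℝ, F (t • x) = t) :
    ∀ N : X → ℝ,
      (N = fun x => sSup {y : ℝ | ∃ f : X → ℝ,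
        (∀ a b, |f a - f b| ≤ q (a - b)) ∧ f 0 = 0 ∧ y = f x}) →
      (N 0 = 0) ∧
      (∀ x, N x = 0 → x = 0) ∧
      (∀ (s : ℝ) (x : X), N (s • x) = |s| * N x) ∧
      (∀ x y, N (x + y) ≤ N x + N y) ∧
      (∀ x, N x ≤ q x ∧ q x ≤ L * N x) := by
  intro N hN
  set S : X → Set ℝ := fun z => {y : ℝ | ∃ f : X → ℝ,
      (∀ a b, |f a - f b| ≤ q (a - b)) ∧ f 0 = 0 ∧ y = f z} with hS
  have hNS : ∀ z, N z = sSup (S z) := fun z => by rw [hN]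
  have hmem0 : ∀ z, (0 : ℝ) ∈ S z := fun z =>
    ⟨fun _ => 0, fun a b => by simpa using hq0 (a - b), rfl, rfl⟩
  have hne : ∀ z, (S z).Nonempty := fun z => ⟨0, hmem0 z⟩
  have hub : ∀ z, ∀ y ∈ S z, y ≤ q z := by
    rintro z y ⟨f, hf, hf0, rfl⟩
    calc f z = f z - f 0 := by rw [hf0, sub_zero]
    _ ≤ |f z - f 0| := le_abs_self _
    _ ≤ q (z - 0) := hf z 0
    _ = q z := by rw [sub_zero]
  have hbdd : ∀ z, BddAbove (S z) := fun z => ⟨q z, hub z⟩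
  have hNle : ∀ z, N z ≤ q z := fun z => (hNS z) ▸ csSup_le (hne z) (hub z)
  have hN0 : ∀ z, 0 ≤ N z := fun z => (hNS z) ▸ le_csSup (hbdd z) (hmem0 z)
  have hq00 : q 0 = 0 := (hqeq 0).mpr rfl
  have hNzero : N 0 = 0 := le_antisymm (hq00 ▸ hNle 0) (hN0 0)
  -- q x ≤ L * N x
  have hqLN : ∀ x, q x ≤ L * N x := by
    intro x
    rcases eq_or_ne x 0 with rfl | hx
    · rw [hq00]; exact mul_nonneg hL.le (hN0 0)
    · have hqx : 0 < q x := lt_of_le_of_ne (hq0 x) fun h => hx ((hqeq x).mp h.symm)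
      set u : X := (q x)⁻¹ • x with hu
      have hqu : q u = 1 := by
        rw [hu, hqsmul, abs_of_pos (inv_pos.mpr hqx), inv_mul_cancel₀ hqx.ne']
      obtain ⟨F, hF, hF0, hFt⟩ := hext u hqu
      have hmem : L⁻¹ * q x ∈ S x := by
        refine ⟨fun a => L⁻¹ * F a, fun a b => ?_, by simp [hF0], ?_⟩
        · rw [← mul_sub, abs_mul, abs_of_pos (inv_pos.mpr hL)]
          calc L⁻¹ * |F a - F b| ≤ L⁻¹ * (L * q (a - b)) := by
                exact mul_le_mul_of_nonneg_left (hF a b) (inv_pos.mpr hL).le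
          _ = q (a - b) := by field_simp
        · have hx' : (q x) • u = x := by rw [hu, smul_inv_smul₀ hqx.ne']
          have h2 := hFt (q x)
          rw [hx'] at h2
          show L⁻¹ * q x = L⁻¹ * F x
          rw [h2]
      have : L⁻¹ * q x ≤ N x := (hNS x) ▸ le_csSup (hbdd x) hmem
      calc q x = L * (L⁻¹ * q x) := by field_simp
      _ ≤ L * N x := mul_le_mul_of_nonneg_left this hL.le
  -- homogeneity, one direction
  have hsmul_le : ∀ (s : ℝ), s ≠ 0 → ∀ x, N (s • x) ≤ |s| * N x := by
    intro s hs x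
    have habs : 0 < |s| := abs_pos.mpr hs
    rw [hNS]
    apply csSup_le (hne _)
    rintro y ⟨f, hf, hf0, rfl⟩
    have hmem : |s|⁻¹ * f (s • x) ∈ S x := by
      refine ⟨fun a => |s|⁻¹ * f (s • a), fun a b => ?_, by simp [hf0], rfl⟩
      rw [← mul_sub, abs_mul, abs_of_pos (inv_pos.mpr habs)]
      calc |s|⁻¹ * |f (s • a) - f (s • b)| ≤ |s|⁻¹ * q (s • a - s • b) := by
            exact mul_le_mul_of_nonneg_left (hf _ _) (inv_pos.mpr habs).le
      _ = |s|⁻¹ * (|s| * q (a - b)) := by rw [← smul_sub, hqsmul]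
      _ = q (a - b) := by field_simp
    have h1 : |s|⁻¹ * f (s • x) ≤ N x := (hNS x) ▸ le_csSup (hbdd x) hmem
    calc f (s • x) = |s| * (|s|⁻¹ * f (s • x)) := by field_simp
    _ ≤ |s| * N x := mul_le_mul_of_nonneg_left h1 habs.le
  have hsmul : ∀ (s : ℝ) (x : X), N (s • x) = |s| * N x := by
    intro s x
    rcases eq_or_ne s 0 with rfl | hs
    · simp [hNzero]
    · refine le_antisymm (hsmul_le s hs x) ?_
      have habs : 0 < |s| := abs_pos.mpr hs
      have h2 : N x ≤ |s|⁻¹ * N (s • x) := by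
        have := hsmul_le s⁻¹ (inv_ne_zero hs) (s • x)
        rwa [inv_smul_smul₀ hs, abs_inv] at this
      calc |s| * N x ≤ |s| * (|s|⁻¹ * N (s • x)) := mul_le_mul_of_nonneg_left h2 habs.le
      _ = N (s • x) := by field_simp
  -- subadditivity
  have hadd : ∀ x y, N (x + y) ≤ N x + N y := by
    intro x y
    rw [hNS]
    apply csSup_le (hne _)
    rintro w ⟨f, hf, hf0, rfl⟩
    have hg : f (x + y) - f y ∈ S x := by
      refine ⟨fun a => f (a + y) - f y, fun a b => ?_, by simp, rfl⟩
      have : (fun a => f (a + y) - f y) a - (fun a => f (a + y) - f y) b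
          = f (a + y) - f (b + y) := by ring
      rw [this]
      calc |f (a + y) - f (b + y)| ≤ q (a + y - (b + y)) := hf _ _
      _ = q (a - b) := by congr 1; abel
    have hfy : f y ∈ S y := ⟨f, hf, hf0, rfl⟩
    have h1 : f (x + y) - f y ≤ N x := (hNS x) ▸ le_csSup (hbdd x) hg
    have h2 : f y ≤ N y := (hNS y) ▸ le_csSup (hbdd y) hfy
    linarith
  exact ⟨hNzero, fun x hx => (hqeq x).mp (le_antisymm (by
      have := hqLN x; rw [hx, mul_zero] at this; exact this) (hq0 x)),
    hsmul, hadd, fun x => ⟨hNle x, hqLN x⟩⟩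
end
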